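/- arXiv:2311.12218 — 3 statements merged into one kernel-verified Lean document; each statement's English description precedes it below -/
import Mathlib

section
/- Let D = (Σ, Const) be a precedence-only declarative process and define M := Σ \ { a ∈ Σ : there exist distinct b,c ∈ Σ with b ≲occ c, c ≲occ b, and b ≲occ a }. Then PossIm(D) is exactly the set of down-sets of the poset (M, ≲occ|_M); that is, a subset I ⊆ Σ is the image of some trace of D if and only if I ⊆ M and I is a down-set of (M, ≲occ|_M). -/
/-- A (first-passage) trace of a precedence-only declarative process. -/
def IsTraceP {α : Type*} (Prec : α → α → Prop) (τ : List α) : Prop :=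
  τ.Nodup ∧ ∀ a b, Prec a b → b ∈ τ → [a, b].Sublist τ

/-- The image (set of terms) of the sequence `τ`. -/
def imList {α : Type*} (τ : List α) : Set α := {x | x ∈ τ}

/-- The set `M := Σ \ { a : ∃ distinct b, c with b ≲occ c, c ≲occ b and b ≲occ a }`. -/
def Mset {α : Type*} (occ : α → α → Prop) : Set α :=
  {a | ¬ ∃ b c : α, b ≠ c ∧ occ b c ∧ occ c b ∧ occ b a}

private lemma pair_sublist_trans {α : Type*} {a b c : α} :
    ∀ {l : List α}, l.Nodup → [a, b].Sublist l → [b, c].Sublist l → [a, c].Sublist l := by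
  intro l
  induction l with
  | nil => intro _ h; simp at h
  | cons x t ih =>
    intro hnd hab hbc
    rcases List.sublist_cons_iff.mp hab with hab' | ⟨r, hr, hrsub⟩
    · rcases List.sublist_cons_iff.mp hbc with hbc' | ⟨r2, hr2, hr2sub⟩
      · exact (ih (List.nodup_cons.mp hnd).2 hab' hbc').cons x
      · -- [b,c] = x :: r2, so b = x; but b ∈ t, contradicting nodup
        have hbx : b = x := by
          have := hr2; simp only [List.cons.injEq] at this; exact this.1
        have hbt : b ∈ t := hab'.subset (by simp)
        exact absurd (hbx ▸ hbt) (List.nodup_cons.mp hnd).1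
    · -- [a,b] = x :: r, so a = x and r = [b]
      have hax : a = x := by
        have := hr; simp only [List.cons.injEq] at this; exact this.1
      have hrb : r = [b] := by
        have := hr; simp only [List.cons.injEq] at this; exact this.2.symm
      have hbt : b ∈ t := by
        have := hrsub; rw [hrb] at this; simpa using this
      have hct : c ∈ t := by
        rcases List.sublist_cons_iff.mp hbc with hbc' | ⟨r2, hr2, hr2sub⟩
        · exact hbc'.subset (by simp)
        · have hbx : b = x := by
            have := hr2; simp only [List.cons.injEq] at this; exact this.1
          exact absurd (hbx ▸ hbt) (List.nodup_cons.mp hnd).1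
      rw [hax]
      exact List.cons_sublist_cons.mpr (List.singleton_sublist.mpr hct)

private lemma occ_mem_sublist {α : Type*} {Prec : α → α → Prop} {τ : List α}
    (hτ : IsTraceP Prec τ) {a b : α} (h : Relation.ReflTransGen Prec a b)
    (hb : b ∈ τ) : a ∈ τ ∧ (a = b ∨ [a, b].Sublist τ) := by
  induction h using Relation.ReflTransGen.head_induction_on with
  | refl => exact ⟨hb, Or.inl rfl⟩
  | head h' _ ih =>
    obtain ⟨hx, hxb⟩ := ih
    have hax := hτ.2 _ _ h' hx
    refine ⟨hax.subset (by simp), Or.inr ?_⟩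
    rcases hxb with rfl | hsub
    · exact hax
    · exact pair_sublist_trans hτ.1 hax hsub

private lemma occ_strict_sublist {α : Type*} {Prec : α → α → Prop} {τ : List α}
    (hτ : IsTraceP Prec τ) {a b : α} (h : Relation.ReflTransGen Prec a b)
    (hne : a ≠ b) (hb : b ∈ τ) : [a, b].Sublist τ := by
  rcases h.cases_head with rfl | ⟨x, hax, hxb⟩
  · exact absurd rfl hne
  · obtain ⟨hxτ, hxb'⟩ := occ_mem_sublist hτ hxb hb
    have haxs := hτ.2 _ _ hax hxτ
    rcases hxb' with rfl | hsub
    · exact haxs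
    · exact pair_sublist_trans hτ.1 haxs hsub

private lemma exists_min_elt {α : Type*} (occ : α → α → Prop)
    (htrans : ∀ {a b c}, occ a b → occ b c → occ a c) :
    ∀ s : Finset α, s.Nonempty →
      (∀ a ∈ s, ∀ b ∈ s, occ a b → occ b a → a = b) →
      ∃ m ∈ s, ∀ x ∈ s, x ≠ m → ¬ occ x m := by
  classical
  intro s
  induction s using Finset.strongInduction with
  | _ s ih =>
    rintro ⟨x, hx⟩ hanti
    by_cases hmin : ∀ z ∈ s, z ≠ x → ¬ occ z x
    · exact ⟨x, hx, hmin⟩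
    · push_neg at hmin
      obtain ⟨y, hy, hyx, hocc⟩ := hmin
      set s' := s.filter (fun z => occ z x ∧ z ≠ x) with hs'
      have hsub : s' ⊆ s := Finset.filter_subset _ _
      have hxns : x ∉ s' := by simp [hs']
      have hss : s' ⊂ s := Finset.ssubset_iff_of_subset hsub |>.mpr ⟨x, hx, hxns⟩
      have hne' : s'.Nonempty := ⟨y, by simp [hs', hy, hocc, hyx]⟩
      obtain ⟨m, hm, hmmin⟩ := ih s' hss hne'
        (fun a ha b hb => hanti a (hsub ha) b (hsub hb))
      have hmx : occ m x ∧ m ≠ x := by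
        have := hm; simp [hs'] at this; exact this.2
      refine ⟨m, hsub hm, fun z hz hzm hzocc => ?_⟩
      have hzx : occ z x := htrans hzocc hmx.1
      have hznex : z ≠ x := by
        rintro rfl
        exact hzm (hanti z hz m (hsub hm) hzocc hmx.1 ▸ rfl)
      exact hmmin z (by simp [hs', hz, hzx, hznex]) hzm hzocc

private lemma exists_toposort {α : Type*} (occ : α → α → Prop)
    (htrans : ∀ {a b c}, occ a b → occ b c → occ a c) :
    ∀ s : Finset α,
      (∀ a ∈ s, ∀ b ∈ s, occ a b → occ b a → a = b) →
      ∃ τ : List α, τ.Nodup ∧ (∀ x, x ∈ τ ↔ x ∈ s) ∧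
        ∀ a ∈ s, ∀ b ∈ s, a ≠ b → occ a b → [a, b].Sublist τ := by
  classical
  intro s
  induction s using Finset.strongInduction with
  | _ s ih =>
    intro hanti
    rcases s.eq_empty_or_nonempty with rfl | hne
    · exact ⟨[], by simp⟩
    · obtain ⟨m, hm, hmin⟩ := exists_min_elt occ htrans s hne hanti
      obtain ⟨τ, hnd, hmem, hord⟩ := ih (s.erase m) (Finset.erase_ssubset hm)
        (fun a ha b hb => hanti a (Finset.mem_of_mem_erase ha) b (Finset.mem_of_mem_erase hb))
      have hmτ : m ∉ τ := fun h => by simp [hmem m] at h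
      refine ⟨m :: τ, List.nodup_cons.mpr ⟨hmτ, hnd⟩, ?_, ?_⟩
      · intro x
        simp only [List.mem_cons, hmem, Finset.mem_erase]
        constructor
        · rintro (rfl | ⟨_, h⟩)
          · exact hm
          · exact h
        · intro hxs
          by_cases hxm : x = m
          · exact Or.inl hxm
          · exact Or.inr ⟨hxm, hxs⟩
      · intro a ha b hb hab hocc
        by_cases hbm : b = m
        · subst hbm
          exact absurd hocc (hmin a ha hab)
        · by_cases ham : a = m
          · subst ham
            have hbτ : b ∈ τ := (hmem b).mpr (Finset.mem_erase.mpr ⟨hbm, hb⟩)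
            exact List.cons_sublist_cons.mpr (List.singleton_sublist.mpr hbτ)
          · exact (hord a (Finset.mem_erase.mpr ⟨ham, ha⟩) b
              (Finset.mem_erase.mpr ⟨hbm, hb⟩) hab hocc).cons m

/-- for a precedence-only declarative process, a set `I ⊆ Σ` is
the image of some trace if and only if `I ⊆ M` and `I` is a down-set of the
poset `(M, ≲occ|_M)`, where `≲occ = Prec^⊕`. -/
theorem prec_only_possIm_eq_downsets_of_M {α : Type*} [Fintype α]
    (Prec : α → α → Prop) (hP : ∀ a b, Prec a b → a ≠ b)
    (I : Set α) :
    (∃ τ : List α, IsTraceP Prec τ ∧ imList τ = I) ↔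
      (I ⊆ Mset (Relation.ReflTransGen Prec) ∧
        ∀ a ∈ Mset (Relation.ReflTransGen Prec),
          ∀ b ∈ Mset (Relation.ReflTransGen Prec),
            Relation.ReflTransGen Prec a b → b ∈ I → a ∈ I) := by
  classical
  constructor
  · rintro ⟨τ, hτ, rfl⟩
    constructor
    · rintro a ha ⟨b, c, hbc, hbc1, hcb1, hba⟩
      have hbτ : b ∈ τ := (occ_mem_sublist hτ hba ha).1
      have hcτ : c ∈ τ := (occ_mem_sublist hτ hcb1 hbτ).1
      have h1 := occ_strict_sublist hτ hbc1 hbc hcτ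
      have h2 := occ_strict_sublist hτ hcb1 (Ne.symm hbc) hbτ
      have h3 := pair_sublist_trans hτ.1 h1 h2
      have := h3.nodup hτ.1
      simp at this
    · intro a _ b _ hab hbI
      exact (occ_mem_sublist hτ hab hbI).1
  · rintro ⟨hIM, hdown⟩
    set occ := Relation.ReflTransGen Prec with hocc
    have htrans : ∀ {a b c}, occ a b → occ b c → occ a c := fun h1 h2 => h1.trans h2
    set s := (Set.toFinite I).toFinset with hs
    have hmemI : ∀ x, x ∈ s ↔ x ∈ I := fun x => Set.Finite.mem_toFinset _
    have hanti : ∀ a ∈ s, ∀ b ∈ s, occ a b → occ b a → a = b := by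
      intro a ha b hb h1 h2
      by_contra hne
      exact hIM ((hmemI a).mp ha) ⟨a, b, hne, h1, h2, Relation.ReflTransGen.refl⟩
    obtain ⟨τ, hnd, hmem, hord⟩ := exists_toposort occ htrans s hanti
    refine ⟨τ, ⟨hnd, ?_⟩, ?_⟩
    · intro a b hab hbτ
      have hbI : b ∈ I := (hmemI b).mp ((hmem b).mp hbτ)
      have haM : a ∈ Mset occ := by
        rintro ⟨u, v, huv, h1, h2, h3⟩
        exact hIM hbI ⟨u, v, huv, h1, h2, htrans h3 (Relation.ReflTransGen.single hab)⟩
      have haI : a ∈ I := hdown a haM b (hIM hbI) (Relation.ReflTransGen.single hab) hbI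
      exact hord a ((hmemI a).mpr haI) b ((hmemI b).mpr hbI) (hP a b hab)
        (Relation.ReflTransGen.single hab)
    · ext x
      simp only [imList, Set.mem_setOf_eq, hmem, hmemI]
end

section
/- Let D = (Σ, Const) be a precedence-only declarative process and define M := Σ \ { a ∈ Σ : there exist distinct b,c ∈ Σ with b ≲occ c, c ≲occ b, and b ≲occ a }. Then Traces(D) = ⋃_I L((I, ≲occ|_I)), where the union is over all down-sets I of the poset (M, ≲occ|_M). In other words, a sequence τ is a trace of D if and only if there is a down-set I of (M, ≲occ|_M) such that τ is a linear extension of the poset (I, ≲occ|_I). -/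
/-!
Along a trace every `Prec`-predecessor of an occurring activity occurs earlier; chaining this along
paths, every `≲occ`-predecessor of an activity of the trace occurs in it, strictly earlier when
distinct. So the support of a trace is a down-set on which `≲occ` is antisymmetric, hence contains
nothing above a `≲occ`-cycle, i.e. lies in `M`, and the trace linearly extends it. Conversely `M`
is itself down-closed, so a down-set of `(M, ≲occ)` is closed under `Prec`-predecessors, and its
linear extensions order every `Prec`-pair (distinct by irreflexivity) correctly.
-/

/-- The restriction `r|_I := r ∩ (I × I)` of a relation to a set. -/
def restrictRel {α : Type*} (r : α → α → Prop) (I : Set α) : α → α → Prop :=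
  fun a b => a ∈ I ∧ b ∈ I ∧ r a b

/-- `τ` is a linear extension of the poset `(I, r)`. -/
def IsLinExt {α : Type*} (r : α → α → Prop) (I : Set α) (τ : List α) : Prop :=
  τ.Nodup ∧ (∀ x, x ∈ τ ↔ x ∈ I) ∧ ∀ a b, r a b → a ≠ b → [a, b].Sublist τ

open List Relation

theorem List.Nodup.pair_sublist_trans {α : Type*} {τ : List α} (h : τ.Nodup) {a b c : α}
    (hab : [a, b] <+ τ) (hbc : [b, c] <+ τ) : [a, c] <+ τ := by
  induction τ with
  | nil => simp at hab
  | cons x t ih =>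
    rw [nodup_cons] at h
    cases hab with
    | cons _ hab =>
      cases hbc with
      | cons _ hbc => exact (ih h.2 hab hbc).cons x
      | cons_cons _ _ => exact absurd (hab.subset (by simp)) h.1
    | cons_cons _ hb =>
      cases hbc with
      | cons _ hbc => exact (singleton_sublist.2 (hbc.subset (by simp))).cons_cons a
      | cons_cons _ _ => exact absurd (singleton_sublist.1 hb) h.1

theorem List.Nodup.not_pair_sublist_swap {α : Type*} {τ : List α} (h : τ.Nodup) {a b : α}
    (hab : [a, b] <+ τ) : ¬[b, a] <+ τ :=
  fun hba => nodup_iff_sublist.1 h a (h.pair_sublist_trans hab hba)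

theorem mem_Mset_of_reflTransGen {α : Type*} {r : α → α → Prop} {a b : α}
    (hab : ReflTransGen r a b) (hb : b ∈ Mset (ReflTransGen r)) : a ∈ Mset (ReflTransGen r) :=
  fun ⟨c, d, hcd, hc_d, hd_c, hca⟩ => hb ⟨c, d, hcd, hc_d, hd_c, hca.trans hab⟩

namespace IsTraceP

variable {α : Type*} {Prec : α → α → Prop} {τ : List α}

theorem pair_sublist_of_transGen (hτ : IsTraceP Prec τ) {a b : α} (hab : TransGen Prec a b)
    (hb : b ∈ τ) : [a, b] <+ τ := by
  induction hab with
  | single h => exact hτ.2 _ _ h hb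
  | @tail c b _ hcb ih =>
    have hcb' : [c, b] <+ τ := hτ.2 _ _ hcb hb
    exact hτ.1.pair_sublist_trans (ih (hcb'.subset (by simp))) hcb'

theorem pair_sublist_of_reflTransGen (hτ : IsTraceP Prec τ) {a b : α}
    (hab : ReflTransGen Prec a b) (hne : a ≠ b) (hb : b ∈ τ) : [a, b] <+ τ :=
  hτ.pair_sublist_of_transGen ((reflTransGen_iff_eq_or_transGen.1 hab).resolve_left hne.symm) hb

theorem mem_of_reflTransGen (hτ : IsTraceP Prec τ) {a b : α} (hab : ReflTransGen Prec a b)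
    (hb : b ∈ τ) : a ∈ τ := by
  rcases eq_or_ne a b with rfl | hne
  · exact hb
  · exact (hτ.pair_sublist_of_reflTransGen hab hne hb).subset (by simp)

theorem mem_Mset (hτ : IsTraceP Prec τ) {a : α} (ha : a ∈ τ) : a ∈ Mset (ReflTransGen Prec) := by
  rintro ⟨b, c, hbc, hb_c, hc_b, hba⟩
  have hb : b ∈ τ := hτ.mem_of_reflTransGen hba ha
  have hc : c ∈ τ := hτ.mem_of_reflTransGen hc_b hb
  exact hτ.1.not_pair_sublist_swap (hτ.pair_sublist_of_reflTransGen hb_c hbc hc)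
    (hτ.pair_sublist_of_reflTransGen hc_b hbc.symm hb)

theorem isLinExt (hτ : IsTraceP Prec τ) :
    IsLinExt (restrictRel (ReflTransGen Prec) {x | x ∈ τ}) {x | x ∈ τ} τ :=
  ⟨hτ.1, fun _ => Iff.rfl, fun _ _ ⟨_, hb, hab⟩ hne => hτ.pair_sublist_of_reflTransGen hab hne hb⟩

end IsTraceP

theorem IsLinExt.isTraceP {α : Type*} {Prec : α → α → Prop} (hP : ∀ a b, Prec a b → a ≠ b)
    {I : Set α} {τ : List α} (hIM : I ⊆ Mset (ReflTransGen Prec))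
    (hdown : ∀ a ∈ Mset (ReflTransGen Prec), ∀ b ∈ Mset (ReflTransGen Prec),
      ReflTransGen Prec a b → b ∈ I → a ∈ I)
    (hτ : IsLinExt (restrictRel (ReflTransGen Prec) I) I τ) : IsTraceP Prec τ := by
  refine ⟨hτ.1, fun a b hab hb => ?_⟩
  have hbI : b ∈ I := (hτ.2.1 b).1 hb
  have hab' : ReflTransGen Prec a b := .single hab
  have haI : a ∈ I := hdown a (mem_Mset_of_reflTransGen hab' (hIM hbI)) b (hIM hbI) hab' hbI
  exact hτ.2.2 a b ⟨haI, hbI, hab'⟩ (hP a b hab)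

theorem prec_only_traces_eq_union_linExts_general {α : Type*}
    (Prec : α → α → Prop) (hP : ∀ a b, Prec a b → a ≠ b)
    (τ : List α) :
    IsTraceP Prec τ ↔
      ∃ I : Set α,
        I ⊆ Mset (Relation.ReflTransGen Prec) ∧
        (∀ a ∈ Mset (Relation.ReflTransGen Prec),
          ∀ b ∈ Mset (Relation.ReflTransGen Prec),
            Relation.ReflTransGen Prec a b → b ∈ I → a ∈ I) ∧
        IsLinExt (restrictRel (Relation.ReflTransGen Prec) I) I τ := by
  constructor
  · intro hτ
    exact ⟨{x | x ∈ τ}, fun _ => hτ.mem_Mset,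
      fun _ _ _ _ hab hb => hτ.mem_of_reflTransGen hab hb, hτ.isLinExt⟩
  · rintro ⟨I, hIM, hdown, hτ⟩
    exact hτ.isTraceP hP hIM hdown

/-- for a precedence-only declarative process, `τ` is a trace of
`D` if and only if `τ` is a linear extension of `(I, ≲occ|_I)` for some
down-set `I` of the poset `(M, ≲occ|_M)`, where `≲occ = Prec^⊕`. -/
theorem prec_only_traces_eq_union_linExts {α : Type*} [Fintype α]
    (Prec : α → α → Prop) (hP : ∀ a b, Prec a b → a ≠ b)
    (τ : List α) :
    IsTraceP Prec τ ↔
      ∃ I : Set α,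
        I ⊆ Mset (Relation.ReflTransGen Prec) ∧
        (∀ a ∈ Mset (Relation.ReflTransGen Prec),
          ∀ b ∈ Mset (Relation.ReflTransGen Prec),
            Relation.ReflTransGen Prec a b → b ∈ I → a ∈ I) ∧
        IsLinExt (restrictRel (Relation.ReflTransGen Prec) I) I τ :=
  prec_only_traces_eq_union_linExts_general Prec hP τ
end

section
/- Let D = (Σ, Const) be a successor-only declarative process and define CoreOcc(D) := { K ∈ Σ/≲occ : ⪯_K is antisymmetric }, where Σ/≲occ is the set of ≲occ-equivalence classes. Then PossIm(D) is exactly the set of all unions of elements of CoreOcc(D); that is, I ∈ PossIm(D) if and only if I = K₁ ∪ ⋯ ∪ K_m for some (possibly empty) collection {K₁, …, K_m} ⊆ CoreOcc(D). -/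
/-- The implied-occurrence relation `≲occ` of a successor-only process. -/
def occS {α : Type*} (Succ : α → α → Prop) : α → α → Prop :=
  Relation.ReflTransGen (fun a b => Succ a b ∨ Succ b a)

/-- `⪯_I` for the successor-only case (`→ord = Succ`). -/
def preS {α : Type*} (Succ : α → α → Prop) (I : Set α) : α → α → Prop :=
  Relation.ReflTransGen (restrictRel Succ I)

/-- A (first-passage) trace of a successor-only declarative process: for every
`Succ(a,b) ∈ Const`, `a` occurs iff `b` occurs, and when both occur, `a`
appears before `b`. -/
def IsTraceS {α : Type*} (Succ : α → α → Prop) (τ : List α) : Prop :=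
  τ.Nodup ∧ ∀ a b, Succ a b → ((a ∈ τ ↔ b ∈ τ) ∧ (a ∈ τ → [a, b].Sublist τ))

/-- `CoreOcc(D)`: the `≲occ`-equivalence classes `K` for which `⪯_K` is
antisymmetric. -/
def CoreOcc {α : Type*} (Succ : α → α → Prop) : Set (Set α) :=
  {K | (∃ a : α, K = {b | occS Succ a b}) ∧
    ∀ x y, preS Succ K x y → preS Succ K y x → x = y}

/-!
A trace lists its image without repetition and with every `Succ`-edge pointing forward, so
positions in the trace strictly increase along `⪯_I`; hence `⪯_K` is antisymmetric on each
`≲occ`-class `K` of the image, and the image, being closed under `≲occ`, is the union of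
these classes. Conversely, on a union `I` of classes in `CoreOcc` every `⪯_I`-path stays inside
one class, so `⪯_I` is a partial order; listing `I` along a linear extension of it is a trace.
-/

namespace List

variable {α : Type*}

theorem idxOf_lt_idxOf_of_pair_sublist [DecidableEq α] {a b : α} {l : List α}
    (h : [a, b].Sublist l) (hl : l.Nodup) : l.idxOf a < l.idxOf b := by
  induction l with
  | nil => simp at h
  | cons c l ih =>
    rw [nodup_cons] at hl
    cases h with
    | cons _ h =>
      have hca : c ≠ a := fun hc => hl.1 (hc ▸ h.subset (by simp))
      have hcb : c ≠ b := fun hc => hl.1 (hc ▸ h.subset (by simp))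
      rw [idxOf_cons_ne _ hca, idxOf_cons_ne _ hcb]
      exact Nat.succ_lt_succ (ih h hl.2)
    | cons_cons _ h =>
      have hab : a ≠ b := fun hc => hl.1 (hc ▸ h.subset (by simp))
      rw [idxOf_cons_self, idxOf_cons_ne _ hab]
      exact Nat.succ_pos _

theorem pair_sublist_or_pair_sublist {a b : α} {l : List α} (ha : a ∈ l) (hb : b ∈ l)
    (hab : a ≠ b) : [a, b].Sublist l ∨ [b, a].Sublist l := by
  induction l with
  | nil => simp at ha
  | cons c l ih =>
    rcases mem_cons.1 ha with rfl | ha'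
    · exact .inl ((singleton_sublist.2 ((mem_cons.1 hb).resolve_left hab.symm)).cons_cons a)
    rcases mem_cons.1 hb with rfl | hb'
    · exact .inr ((singleton_sublist.2 ha').cons_cons b)
    exact (ih ha' hb').imp (·.cons c) (·.cons c)

theorem Pairwise.pair_sublist {r : α → α → Prop} [Std.Antisymm r] {a b : α} {l : List α}
    (hl : l.Pairwise r) (ha : a ∈ l) (hb : b ∈ l) (hrab : r a b) (hab : a ≠ b) :
    [a, b].Sublist l :=
  (pair_sublist_or_pair_sublist ha hb hab).resolve_right fun hba =>
    hab (Std.Antisymm.antisymm _ _ hrab (pairwise_iff_forall_sublist.1 hl hba))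

end List

section

variable {α : Type*} {Succ : α → α → Prop}

theorem occS_symm {a b : α} (h : occS Succ a b) : occS Succ b a :=
  have : Std.Symm (fun a b => Succ a b ∨ Succ b a) := ⟨fun _ _ h => h.symm⟩
  Relation.ReflTransGen.stdSymm.symm _ _ h

theorem occS_class_eq {a b : α} (h : occS Succ a b) :
    {c | occS Succ a c} = {c | occS Succ b c} :=
  Set.ext fun _ => ⟨(occS_symm h).trans, h.trans⟩

theorem occS_of_preS {K : Set α} {x y : α} (h : preS Succ K x y) : occS Succ x y :=
  Relation.ReflTransGen.mono (fun _ _ hr => .inl hr.2.2) _ _ h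

theorem preS_class_of_preS {K : Set α} {x y : α} (h : preS Succ K x y) :
    preS Succ {b | occS Succ x b} x y := by
  induction h with
  | refl => exact .refl
  | tail _ hbc ih =>
    have hxb := occS_of_preS ih
    exact ih.tail ⟨hxb, hxb.tail (.inl hbc.2.2), hbc.2.2⟩

def IsOccClosed (Succ : α → α → Prop) (I : Set α) : Prop :=
  ∀ a b, Succ a b → (a ∈ I ↔ b ∈ I)

theorem IsOccClosed.mem_iff {I : Set α} (hI : IsOccClosed Succ I) {a b : α} (h : occS Succ a b) :
    a ∈ I ↔ b ∈ I := by
  induction h with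
  | refl => rfl
  | tail _ hbc ih => exact ih.trans (hbc.elim (hI _ _) fun h => (hI _ _ h).symm)

theorem IsOccClosed.eq_sUnion_classes {I : Set α} (hI : IsOccClosed Succ I) :
    I = ⋃₀ {K | ∃ a ∈ I, K = {b | occS Succ a b}} := by
  ext x
  constructor
  · exact fun hx => ⟨_, ⟨x, hx, rfl⟩, .refl⟩
  · rintro ⟨_, ⟨a, ha, rfl⟩, hax⟩
    exact (hI.mem_iff hax).1 ha

theorem isOccClosed_sUnion_classes {S : Set (Set α)}
    (hS : ∀ K ∈ S, ∃ a, K = {b | occS Succ a b}) : IsOccClosed Succ (⋃₀ S) := by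
  have key : ∀ a b, occS Succ a b → a ∈ ⋃₀ S → b ∈ ⋃₀ S := by
    rintro a b hab ⟨K, hKS, haK⟩
    obtain ⟨c, rfl⟩ := hS K hKS
    exact ⟨_, hKS, haK.trans hab⟩
  exact fun a b h =>
    ⟨key a b (.single (.inl h)), key b a (.single (.inr h))⟩

theorem IsTraceS.isOccClosed {τ : List α} (hτ : IsTraceS Succ τ) :
    IsOccClosed Succ (imList τ) :=
  fun a b h => (hτ.2 a b h).1

theorem IsTraceS.eq_or_idxOf_lt_of_preS [DecidableEq α] {τ : List α} (hτ : IsTraceS Succ τ)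
    {K : Set α} (hK : K ⊆ imList τ) {x y : α} (h : preS Succ K x y) :
    x = y ∨ τ.idxOf x < τ.idxOf y := by
  induction h with
  | refl => exact .inl rfl
  | tail _ hbc ih =>
    have hlt := List.idxOf_lt_idxOf_of_pair_sublist ((hτ.2 _ _ hbc.2.2).2 (hK hbc.1)) hτ.1
    exact .inr (ih.elim (· ▸ hlt) (·.trans hlt))

theorem IsTraceS.preS_antisymm {τ : List α} (hτ : IsTraceS Succ τ) {K : Set α}
    (hK : K ⊆ imList τ) {x y : α} (hxy : preS Succ K x y) (hyx : preS Succ K y x) : x = y := by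
  classical
  rcases hτ.eq_or_idxOf_lt_of_preS hK hxy with rfl | hlt
  · rfl
  rcases hτ.eq_or_idxOf_lt_of_preS hK hyx with rfl | hgt
  · rfl
  exact absurd (hlt.trans hgt) (lt_irrefl _)

theorem IsTraceS.class_mem_coreOcc {τ : List α} (hτ : IsTraceS Succ τ) {a : α}
    (ha : a ∈ imList τ) : {b | occS Succ a b} ∈ CoreOcc Succ :=
  ⟨⟨a, rfl⟩, fun _ _ => hτ.preS_antisymm fun _ hb => (hτ.isOccClosed.mem_iff hb).1 ha⟩

theorem IsTraceS.exists_sUnion_coreOcc {τ : List α} (hτ : IsTraceS Succ τ) :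
    ∃ S ⊆ CoreOcc Succ, imList τ = ⋃₀ S := by
  refine ⟨_, ?_, hτ.isOccClosed.eq_sUnion_classes⟩
  rintro _ ⟨a, ha, rfl⟩
  exact hτ.class_mem_coreOcc ha

theorem preS_sUnion_antisymm {S : Set (Set α)} (hS : S ⊆ CoreOcc Succ) {x y : α}
    (hxy : preS Succ (⋃₀ S) x y) (hyx : preS Succ (⋃₀ S) y x) : x = y := by
  rcases hxy.cases_head with rfl | ⟨_, ⟨⟨K, hKS, hxK⟩, -⟩, -⟩
  · rfl
  obtain ⟨⟨a, rfl⟩, hKanti⟩ := hS hKS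
  have hclass_x := occS_class_eq hxK
  have hclass_y := hclass_x.trans (occS_class_eq (occS_of_preS hxy))
  exact hKanti x y (hclass_x ▸ preS_class_of_preS hxy) (hclass_y ▸ preS_class_of_preS hyx)

theorem exists_isTraceS_of_preS_antisymm (hS : ∀ a b, Succ a b → a ≠ b) {I : Set α}
    (hfin : I.Finite) (hI : IsOccClosed Succ I)
    (hanti : ∀ x y, preS Succ I x y → preS Succ I y x → x = y) :
    ∃ τ : List α, IsTraceS Succ τ ∧ imList τ = I := by
  classical
  have : IsPartialOrder α (preS Succ I) :=
    { refl := fun _ => .refl, trans := fun _ _ _ => .trans, antisymm := hanti }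
  obtain ⟨s, hs, hle⟩ := extend_partialOrder (preS Succ I)
  have hmem : ∀ x, x ∈ hfin.toFinset.sort s ↔ x ∈ I := fun x => by
    rw [Finset.mem_sort, Set.Finite.mem_toFinset]
  refine ⟨hfin.toFinset.sort s, ⟨Finset.sort_nodup _ _, fun a b hab => ?_⟩, Set.ext hmem⟩
  rw [hmem, hmem]
  refine ⟨hI a b hab, fun haI => ?_⟩
  have hbI := (hI a b hab).1 haI
  exact (Finset.pairwise_sort _ _).pair_sublist ((hmem a).2 haI) ((hmem b).2 hbI)
    (hle _ _ (.single ⟨haI, hbI, hab⟩)) (hS a b hab)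

end

/-- for a successor-only declarative process, a set `I ⊆ Σ` is
the image of some trace iff `I` is a union of elements of `CoreOcc(D)`. -/
theorem succ_only_possIm_eq_unions_of_core {α : Type*} [Fintype α]
    (Succ : α → α → Prop) (hS : ∀ a b, Succ a b → a ≠ b)
    (I : Set α) :
    (∃ τ : List α, IsTraceS Succ τ ∧ imList τ = I) ↔
      ∃ S ⊆ CoreOcc Succ, I = ⋃₀ S := by
  constructor
  · rintro ⟨τ, hτ, rfl⟩
    exact hτ.exists_sUnion_coreOcc
  · rintro ⟨S, hSc, rfl⟩
    exact exists_isTraceS_of_preS_antisymm hS (Set.toFinite _)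
      (isOccClosed_sUnion_classes fun K hK => (hSc hK).1) fun _ _ => preS_sUnion_antisymm hSc
end
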